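/- If B is a non-initial block of a finite path in the race-detecting state graph of a barrier-free program and u is the initial node of B, then no thread is normal at u and ample_G(u) = enabled(u); moreover, at every node of B, no thread other than tid(B) is normal. -/
import Mathlib


namespace MC

/-- Statements of a thread: acquire/release a lock, barrier exit, or an nsync statement. -/
inductive Stmt (Lock NStmt : Type) where
  | acquire : Lock → Stmt Lock NStmt
  | release : Lock → Stmt Lock NStmt
  | exit : Stmt Lock NStmt
  | nsync : NStmt → Stmt Lock NStmt

/-- The kind of a local state: acquire state (with its lock), release state,
barrier state, nsync state, or terminal state. -/
inductive LKind (Lock : Type) where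
  | acquire : Lock → LKind Lock
  | release : Lock → LKind Lock
  | barrier : LKind Lock
  | nsync : LKind Lock
  | term : LKind Lock

def LKind.isBarrier {L : Type} : LKind L → Bool
  | .barrier => true
  | _ => false

def LKind.isTerm {L : Type} : LKind L → Bool
  | .term => true
  | _ => false

/-- A multithreaded program with thread ID set `Fin n`. -/
structure Program where
  n : ℕ
  npos : 0 < n
  Lock : Type
  Shared : Type
  Local : Fin n → Type
  NStmt : Fin n → Type
  kind : ∀ i, Local i → LKind Lock
  next : ∀ i, Local i → Local i
  stmts : ∀ i, Local i → Set (NStmt i)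
  stmtsNonempty : ∀ i σ, kind i σ = .nsync → (stmts i σ).Nonempty
  update : ∀ i, Local i → NStmt i → Shared → Local i × Shared

variable {P : Program}

/-- Global statements: a thread ID together with one of its statements. -/
abbrev GStmt (P : Program) := Σ i : Fin P.n, Stmt P.Lock (P.NStmt i)

def GStmt.isNsync (t : GStmt P) : Prop := ∃ m, t.2 = Stmt.nsync m
def GStmt.isExit (t : GStmt P) : Prop := t.2 = Stmt.exit
def GStmt.isExitZero (t : GStmt P) : Prop := t.2 = Stmt.exit ∧ (t.1 : ℕ) = 0
def GStmt.isReleaseOn (t : GStmt P) (l : P.Lock) : Prop := t.2 = Stmt.release l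
def GStmt.isAcquireOn (t : GStmt P) (l : P.Lock) : Prop := t.2 = Stmt.acquire l

/-- A global state: local state of each thread, shared state, lock state
(`none` = free), and barrier wait set. -/
structure GState (P : Program) where
  loc : ∀ i, P.Local i
  sh : P.Shared
  lk : P.Lock → Option (Fin P.n)
  wait : Set (Fin P.n)

/-- Enabledness of a statement at a global state. -/
def Enabled (s : GState P) : GStmt P → Prop
  | ⟨i, st⟩ =>
    match P.kind i (s.loc i), st with
    | .acquire l, .acquire l' => l = l' ∧ s.lk l = none
    | .release l, .release l' => l = l' ∧ s.lk l = some i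
    | .barrier, .exit => i ∉ s.wait
    | .nsync, .nsync m => m ∈ P.stmts i (s.loc i)
    | _, _ => False

open Classical in
/-- Execution of a statement at a global state. -/
noncomputable def execute (s : GState P) : GStmt P → GState P
  | ⟨i, st⟩ =>
    let r : P.Local i × P.Shared × (P.Lock → Option (Fin P.n)) :=
      match st with
      | .acquire l => (P.next i (s.loc i), s.sh, fun l' => if l' = l then some i else s.lk l')
      | .release l => (P.next i (s.loc i), s.sh, fun l' => if l' = l then none else s.lk l')
      | .exit => (P.next i (s.loc i), s.sh, s.lk)
      | .nsync m => ((P.update i (s.loc i) m s.sh).1, (P.update i (s.loc i) m s.sh).2, s.lk)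
    { loc := Function.update s.loc i r.1
      sh := r.2.1
      lk := r.2.2
      wait :=
        if (P.kind i r.1).isBarrier then
          (if s.wait ∪ {i} = Set.univ then (∅ : Set (Fin P.n)) else s.wait ∪ {i})
        else s.wait }

/-- Finite executions: `Exec s ts sf` means the statement sequence `ts` is
step-by-step enabled starting from `s` and leads to `sf`. -/
inductive Exec : GState P → List (GStmt P) → GState P → Prop
  | nil (s : GState P) : Exec s [] s
  | cons {s s' sf : GState P} {t : GStmt P} {l : List (GStmt P)} :
      Enabled s t → execute s t = s' → Exec s' l sf → Exec s (t :: l) sf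

/-- The program has no barrier local states. -/
def NoBarriers (P : Program) : Prop := ∀ i σ, P.kind i σ ≠ LKind.barrier

/-! ### Traces, events, happens-before, data races -/

/-- The thread ID of the event at position `k` of a trace (if any). -/
def tidAt (ts : List (GStmt P)) (k : ℕ) : Option (Fin P.n) := (ts[k]?).map (·.1)

/-- The statement at position `k` satisfies `p`. -/
def stmtIs (ts : List (GStmt P)) (k : ℕ) (p : GStmt P → Prop) : Prop :=
  ∃ t, ts[k]? = some t ∧ p t

/-- Intra-thread order on trace positions. -/
def IntraThread (ts : List (GStmt P)) (j k : ℕ) : Prop :=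
  j < k ∧ k < ts.length ∧ tidAt ts j = tidAt ts k

/-- Release-acquire relation on trace positions: a release of `l` is related to
the next subsequent acquire of `l`. -/
def RelAcq (ts : List (GStmt P)) (j k : ℕ) : Prop :=
  ∃ l : P.Lock, j < k ∧ stmtIs ts j (·.isReleaseOn l) ∧ stmtIs ts k (·.isAcquireOn l) ∧
    ∀ m, j < m → m < k → ¬ stmtIs ts m (·.isAcquireOn l)

/-- The barrier epoch of the event at position `k`: the number of barrier-exit
events of the same thread at positions `≤ k`. -/
noncomputable def epoch (ts : List (GStmt P)) (k : ℕ) : ℕ :=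
  Set.ncard {m : ℕ | m ≤ k ∧ tidAt ts m = tidAt ts k ∧ stmtIs ts m (·.isExit)}

/-- Barrier relation on trace positions: earlier epochs happen before later ones. -/
def BarrierRel (ts : List (GStmt P)) (j k : ℕ) : Prop :=
  j < ts.length ∧ k < ts.length ∧ epoch ts j < epoch ts k

/-- The happens-before relation on trace positions. -/
def HB (ts : List (GStmt P)) : ℕ → ℕ → Prop :=
  Relation.TransGen (fun j k => IntraThread ts j k ∨ RelAcq ts j k ∨ BarrierRel ts j k)

/-- `C` is a conflict relation for `P`: symmetric, relating only nsync statements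
from different threads, and non-conflicting nsync statements from different
threads commute whenever both are enabled. -/
structure IsConflictRel (P : Program) (C : GStmt P → GStmt P → Prop) : Prop where
  symm : ∀ t1 t2, C t1 t2 → C t2 t1
  nsync_left : ∀ t1 t2, C t1 t2 → t1.isNsync
  nsync_right : ∀ t1 t2, C t1 t2 → t2.isNsync
  diff : ∀ t1 t2, C t1 t2 → t1.1 ≠ t2.1
  commute : ∀ t1 t2, t1.isNsync → t2.isNsync → t1.1 ≠ t2.1 → ¬ C t1 t2 →
    ∀ s : GState P, Enabled s t1 → Enabled s t2 →
      execute (execute s t1) t2 = execute (execute s t2) t1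

/-- The events at positions `j` and `k` race: their statements conflict and the
positions are unordered by happens-before. -/
def Races (C : GStmt P → GStmt P → Prop) (ts : List (GStmt P)) (j k : ℕ) : Prop :=
  (∃ t1 t2, ts[j]? = some t1 ∧ ts[k]? = some t2 ∧ C t1 t2) ∧ ¬ HB ts j k ∧ ¬ HB ts k j

/-- The trace contains a data race. -/
def HasRace (C : GStmt P → GStmt P → Prop) (ts : List (GStmt P)) : Prop :=
  ∃ j k, Races C ts j k

/-- The event (statement with per-thread occurrence number) at position `k`. -/
def eventAt (ts : List (GStmt P)) (k : ℕ) : Option (GStmt P × ℕ) :=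
  (ts[k]?).map (fun t => (t, (ts.take (k+1)).countP (fun t' => decide (t'.1 = t.1))))

/-- The set of events of a trace. -/
def events (ts : List (GStmt P)) : Set (GStmt P × ℕ) :=
  {e | ∃ k, eventAt ts k = some e}

/-! ### The race-detecting state graph -/

/-- The edge relation of the local graph of thread `i`. -/
def isLocalStep (i : Fin P.n) (σ σ' : P.Local i) : Prop :=
  match P.kind i σ with
  | .nsync => ∃ m ζ, m ∈ P.stmts i σ ∧ (P.update i σ m ζ).1 = σ'
  | .term => False
  | _ => σ' = P.next i σ

/-- Choice of sets `R i` containing all acquire and release local states and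
meeting every cycle of the local graph of thread `i`. -/
structure RSets (P : Program) where
  R : ∀ i, Set (P.Local i)
  acq_mem : ∀ i σ l, P.kind i σ = LKind.acquire l → σ ∈ R i
  rel_mem : ∀ i σ l, P.kind i σ = LKind.release l → σ ∈ R i
  acyclic : ∀ i σ, σ ∉ R i →
    ¬ Relation.TransGen (fun a b => a ∉ R i ∧ b ∉ R i ∧ isLocalStep i a b) σ σ

/-- Thread `i` is normal at state `s`: its local state is not in `R i` and it
has an enabled statement. -/
def Normal (RS : RSets P) (s : GState P) (i : Fin P.n) : Prop :=
  s.loc i ∉ RS.R i ∧ ∃ st : Stmt P.Lock (P.NStmt i), Enabled s ⟨i, st⟩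

/-- A node of the race-detecting state graph: a state together with, for each
thread, the set of nsync statements recorded since its last synchronization. -/
structure RNode (P : Program) where
  st : GState P
  hist : ∀ i, Set (P.NStmt i)

/-- Edge relation of the race-detecting state graph. -/
def REdge (RS : RSets P) (u : RNode P) (t : GStmt P) (v : RNode P) : Prop :=
  Enabled u.st t ∧ v.st = execute u.st t ∧
  (∀ m, t.2 = Stmt.nsync m → v.hist t.1 = insert m (u.hist t.1)) ∧
  (¬ t.isNsync →
    ((t.isExitZero ∨ u.st.loc t.1 ∈ RS.R t.1) → v.hist t.1 = ∅) ∧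
    (¬ (t.isExitZero ∨ u.st.loc t.1 ∈ RS.R t.1) → v.hist t.1 = u.hist t.1)) ∧
  (∀ i, i ≠ t.1 →
    (t.isExitZero → v.hist i = ∅) ∧ (¬ t.isExitZero → v.hist i = u.hist i)) ∧
  ((∃ i, Normal RS u.st i) → Normal RS u.st t.1 ∧ ∀ j, Normal RS u.st j → t.1 ≤ j)

/-- Paths in the race-detecting state graph. -/
inductive RPath (RS : RSets P) : RNode P → List (GStmt P) → RNode P → Prop
  | nil (u : RNode P) : RPath RS u [] u
  | cons {u v w : RNode P} {t : GStmt P} {l : List (GStmt P)} :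
      REdge RS u t v → RPath RS v l w → RPath RS u (t :: l) w

/-- Reachability in the race-detecting state graph. -/
def RReach (RS : RSets P) (u v : RNode P) : Prop := ∃ l, RPath RS u l v

/-- Thread `i` detects a race at node `u`. -/
def ThreadDetects (C : GStmt P → GStmt P → Prop) (u : RNode P) (i : Fin P.n) : Prop :=
  ∃ j, j ≠ i ∧ ∃ m1 ∈ u.hist i, ∃ m2 ∈ u.hist j,
    C ⟨i, Stmt.nsync m1⟩ ⟨j, Stmt.nsync m2⟩

/-- The edge `(u,t,v)` detects a race: the moving thread arrives at an `R i`,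
barrier, or terminal local state and detects a race at the target node. -/
def EdgeDetects (RS : RSets P) (C : GStmt P → GStmt P → Prop)
    (u : RNode P) (t : GStmt P) (v : RNode P) : Prop :=
  REdge RS u t v ∧
  (v.st.loc t.1 ∈ RS.R t.1 ∨ (P.kind t.1 (v.st.loc t.1)).isBarrier = true ∨
    (P.kind t.1 (v.st.loc t.1)).isTerm = true) ∧
  ThreadDetects C v t.1

/-- The race-detecting state graph detects a race from `u0`. -/
def DetectsFrom (RS : RSets P) (C : GStmt P → GStmt P → Prop) (u0 : RNode P) : Prop :=
  ∃ u t v, RReach RS u0 u ∧ EdgeDetects RS C u t v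

/-- The initial node for state `s0`: all recorded sets empty. -/
def initNode (s0 : GState P) : RNode P := ⟨s0, fun _ => ∅⟩

/-! ### Abstract state graphs and density -/

/-- A state graph of `P`. -/
structure StateGraph (P : Program) where
  V : Type
  edge : V → GStmt P → V → Prop
  stateOf : V → GState P
  edge_enabled : ∀ {u t v}, edge u t v → Enabled (stateOf u) t
  edge_exec : ∀ {u t v}, edge u t v → stateOf v = execute (stateOf u) t
  edge_det : ∀ {u t v v'}, edge u t v → edge u t v' → v = v'

/-- The ample set of a node: the labels of its outgoing edges. -/
def StateGraph.ample (G : StateGraph P) (u : G.V) : Set (GStmt P) :=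
  {t | ∃ v, G.edge u t v}

/-- Paths in a state graph. -/
inductive GPath (G : StateGraph P) : G.V → List (GStmt P) → G.V → Prop
  | nil (u : G.V) : GPath G u [] u
  | cons {u v w : G.V} {t : GStmt P} {l : List (GStmt P)} :
      G.edge u t v → GPath G v l w → GPath G u (t :: l) w

/-- Density of a state graph (the four ample-set conditions). -/
def StateGraph.IsDense (G : StateGraph P) : Prop :=
  (∀ u, (∃ t, Enabled (G.stateOf u) t) → (G.ample u).Nonempty) ∧
  (∀ u t t', t ∈ G.ample u → Enabled (G.stateOf u) t' → t'.1 = t.1 → t' ∈ G.ample u) ∧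
  (∀ u, G.ample u ≠ {t | Enabled (G.stateOf u) t} → ∀ t ∈ G.ample u, t.isNsync) ∧
  (∀ u l, l ≠ [] → GPath G u l u →
    ∃ v l1 l2, l = l1 ++ l2 ∧ GPath G u l1 v ∧
      G.ample v = {t | Enabled (G.stateOf v) t})

/-! ### Paths as functions and block decompositions -/

/-- A path in the race-detecting state graph presented as a node function `f`
along a statement list `ts`. -/
def IsPathFn (RS : RSets P) (f : ℕ → RNode P) (ts : List (GStmt P)) : Prop :=
  ∀ k (h : k < ts.length), REdge RS (f k) (ts.get ⟨k, h⟩) (f (k+1))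

/-- The statement at position `m` continues the block started at position `b`:
it is from the same thread and that thread is normal at the node it executes from. -/
def SameBlockStep (RS : RSets P) (f : ℕ → RNode P) (ts : List (GStmt P)) (b m : ℕ) : Prop :=
  tidAt ts m = tidAt ts b ∧ ∃ t, ts[m]? = some t ∧ Normal RS (f m).st t.1

/-- `c 0 = 0 < c 1 < ⋯ < c N = |ts|` is the block decomposition of the path
`(f, ts)`: block `j` covers positions `[c j, c (j+1))`. -/
structure IsBlockDecomp (RS : RSets P) (f : ℕ → RNode P) (ts : List (GStmt P))
    (N : ℕ) (c : ℕ → ℕ) : Prop where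
  zero : c 0 = 0
  last : c N = ts.length
  mono : ∀ j, j < N → c j < c (j+1)
  inside : ∀ j, j < N → ∀ m, c j < m → m < c (j+1) → SameBlockStep RS f ts (c j) m
  boundary : ∀ j, j < N → c (j+1) < ts.length → ¬ SameBlockStep RS f ts (c j) (c (j+1))

/-- Block `j` is initial: its thread is normal at its starting node. -/
def BlockInitial (RS : RSets P) (f : ℕ → RNode P) (ts : List (GStmt P))
    (c : ℕ → ℕ) (j : ℕ) : Prop :=
  ∃ t, ts[c j]? = some t ∧ Normal RS (f (c j)).st t.1

/-- Block `j` is complete: its thread is not normal at its final node. -/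
def BlockComplete (RS : RSets P) (f : ℕ → RNode P) (ts : List (GStmt P))
    (c : ℕ → ℕ) (j : ℕ) : Prop :=
  ∀ t, ts[c j]? = some t → ¬ Normal RS (f (c (j+1))).st t.1

/-- The position permutation induced by transposing the adjacent segments
`[a,b)` and `[b,d)`. -/
def segSwap (a b d m : ℕ) : ℕ :=
  if m < a then m else if m < b then m + (d - b) else if m < d then m - (b - a) else m

/-- The position permutation induced by transposing positions `p` and `p+1`. -/
def posSwap (p m : ℕ) : ℕ :=
  if m = p then p + 1 else if m = p + 1 then p else m

/-! ### Auxiliary lemmas for stmt11 -/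

lemma normal_iff (hnb : NoBarriers P) (RS : RSets P) (s : GState P) (i : Fin P.n) :
    Normal RS s i ↔ (s.loc i ∉ RS.R i ∧ P.kind i (s.loc i) = .nsync) := by
  constructor
  · rintro ⟨hR, st, hen⟩
    refine ⟨hR, ?_⟩
    cases hk : P.kind i (s.loc i) with
    | acquire l => exact absurd (RS.acq_mem i _ l hk) hR
    | release l => exact absurd (RS.rel_mem i _ l hk) hR
    | barrier => exact absurd hk (hnb i _)
    | nsync => rfl
    | term => cases st <;> simp [Enabled, hk] at hen
  · rintro ⟨hR, hk⟩
    obtain ⟨m, hm⟩ := P.stmtsNonempty i _ hk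
    exact ⟨hR, Stmt.nsync m, by simp [Enabled, hk, hm]⟩

lemma execute_loc_ne (s : GState P) (t : GStmt P) (i : Fin P.n) (h : i ≠ t.1) :
    (execute s t).loc i = s.loc i := by
  obtain ⟨i0, st⟩ := t
  cases st <;> simp [execute, Function.update_of_ne h]

lemma normal_execute (hnb : NoBarriers P) (RS : RSets P) (s : GState P)
    (t : GStmt P) (i : Fin P.n) (h : i ≠ t.1) :
    Normal RS (execute s t) i ↔ Normal RS s i := by
  rw [normal_iff hnb, normal_iff hnb, execute_loc_ne s t i h]

open Classical in
/-- Recorded set of the moving thread at the target node of an edge. -/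
noncomputable def nextHistAt (RS : RSets P) (u : RNode P) (t : GStmt P) :
    Set (P.NStmt t.1) :=
  match t.2 with
  | Stmt.nsync m => insert m (u.hist t.1)
  | _ => if (t.isExitZero ∨ u.st.loc t.1 ∈ RS.R t.1) then ∅ else u.hist t.1

open Classical in
/-- The target node of an edge in the race-detecting state graph. -/
noncomputable def nextNode (RS : RSets P) (u : RNode P) (t : GStmt P) : RNode P :=
  ⟨execute u.st t,
    Function.update (if t.isExitZero then (fun i => (∅ : Set (P.NStmt i))) else u.hist)
      t.1 (nextHistAt RS u t)⟩

lemma redge_nextNode (RS : RSets P) (u : RNode P) (t : GStmt P)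
    (hen : Enabled u.st t) (hno : ∀ i, ¬ Normal RS u.st i) :
    REdge RS u t (nextNode RS u t) := by
  classical
  obtain ⟨i0, st⟩ := t
  have hupd : ∀ (g : ∀ i, Set (P.NStmt i)) (X : Set (P.NStmt i0)),
      Function.update g i0 X i0 = X := fun g X => Function.update_self i0 X g
  refine ⟨hen, rfl, ?_, ?_, ?_, fun ⟨i, hi⟩ => absurd hi (hno i)⟩
  · intro m hm
    cases st with
    | nsync m' =>
        have hmm : m' = m := by injection hm
        subst hmm
        simp [nextNode, nextHistAt, hupd]
    | acquire l => exact absurd hm (by simp)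
    | release l => exact absurd hm (by simp)
    | exit => exact absurd hm (by simp)
  · intro hns
    cases st with
    | nsync m => exact absurd ⟨m, rfl⟩ hns
    | acquire l =>
        constructor <;> intro h <;> simp [nextNode, nextHistAt, hupd, h]
    | release l =>
        constructor <;> intro h <;> simp [nextNode, nextHistAt, hupd, h]
    | exit =>
        constructor <;> intro h <;> simp [nextNode, nextHistAt, hupd, h]
  · intro i hi
    have hne : (nextNode RS u ⟨i0, st⟩).hist i =
        (if GStmt.isExitZero (⟨i0, st⟩ : GStmt P) then (fun i => (∅ : Set (P.NStmt i)))
          else u.hist) i := Function.update_of_ne hi _ _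
    constructor <;> intro h <;> simp [hne, h]

lemma c_le_of_le {RS : RSets P} {f : ℕ → RNode P} {ts : List (GStmt P)}
    {N : ℕ} {c : ℕ → ℕ} (hbd : IsBlockDecomp RS f ts N c)
    {a b : ℕ} (hab : a ≤ b) (hbN : b ≤ N) : c a ≤ c b := by
  induction b with
  | zero => simp [Nat.le_zero.mp hab]
  | succ b ih =>
    rcases Nat.lt_or_ge a (b+1) with h | h
    · exact le_trans (ih (Nat.lt_succ_iff.mp h) (le_trans (Nat.le_succ b) hbN))
        (le_of_lt (hbd.mono b (Nat.lt_of_lt_of_le (Nat.lt_succ_self b) hbN)))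
    · have : a = b + 1 := le_antisymm hab h
      simp [this]

/-- At the initial node of a non-initial block no thread is normal and the
ample set equals the enabled set; at every node of the block, no thread other
than the block's thread is normal. -/
theorem stmt11 (P : Program) (hnb : NoBarriers P) (RS : RSets P)
    (f : ℕ → RNode P) (ts : List (GStmt P)) (hpath : IsPathFn RS f ts)
    (N : ℕ) (c : ℕ → ℕ) (hbd : IsBlockDecomp RS f ts N c)
    (j : ℕ) (hj : j < N) (hni : ¬ BlockInitial RS f ts c j) :
    (∀ i, ¬ Normal RS (f (c j)).st i) ∧
    ({t | ∃ v, REdge RS (f (c j)) t v} = {t | Enabled (f (c j)).st t}) ∧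
    (∀ m, c j ≤ m → m ≤ c (j+1) → ∀ i : Fin P.n,
      tidAt ts (c j) ≠ some i → ¬ Normal RS (f m).st i) := by
  have hcj1 : c (j+1) ≤ ts.length := by
    rw [← hbd.last]; exact c_le_of_le hbd hj (le_refl N)
  have hcj : c j < ts.length := lt_of_lt_of_le (hbd.mono j hj) hcj1
  -- first claim
  have h1 : ∀ i, ¬ Normal RS (f (c j)).st i := by
    intro i hi
    have hedge := hpath (c j) hcj
    obtain ⟨hnorm, -⟩ := hedge.2.2.2.2.2 ⟨i, hi⟩
    exact hni ⟨ts.get ⟨c j, hcj⟩, by simp [List.getElem?_eq_getElem hcj], hnorm⟩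
  refine ⟨h1, ?_, ?_⟩
  · apply Set.Subset.antisymm
    · rintro t ⟨v, he⟩; exact he.1
    · intro t ht; exact ⟨nextNode RS (f (c j)) t, redge_nextNode RS _ t ht h1⟩
  · intro m hm1 hm2 i hti
    induction m, hm1 using Nat.le_induction with
    | base => exact h1 i
    | succ m hm ih =>
      have hmlt : m < c (j+1) := hm2
      have hmlen : m < ts.length := lt_of_lt_of_le hmlt hcj1
      have hedge := hpath m hmlen
      have htid : (ts.get ⟨m, hmlen⟩).1 ≠ i := by
        intro h
        apply hti
        have hm' : tidAt ts m = some i := by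
          simp only [tidAt, List.getElem?_eq_getElem hmlen, Option.map_some]
          exact congrArg some h
        rcases eq_or_lt_of_le hm with heq | hlt
        · rw [heq]; exact hm'
        · rw [← (hbd.inside j hj m hlt hmlt).1]; exact hm'
      intro hn
      rw [hedge.2.1] at hn
      exact ih (le_trans (Nat.le_succ m) hm2)
        ((normal_execute hnb RS _ _ i (Ne.symm htid)).mp hn)

end MC
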